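/- Let A, A₁, A₂, … ∈ B(H,K) with Aₙ → A in norm, and let V be a closed subspace of H on which A is bounded below. Then for all sufficiently large n, dim(K ⊖ Aₙ(V)) = dim(K ⊖ A(V)), where ⊖ denotes orthogonal complement and dim is Hilbert dimension. -/

import Mathlib

/-!
For large `n` we have `‖Aₙ - A‖ < c / 2`, so `Aₙ` is bounded below by `c / 2` on `V` and both
`W = A(V)` and `Wₙ = Aₙ(V)` are closed. If `Pv ⊥ Q(V)` then `‖Pv‖² = re ⟪(P - Q)v, Pv⟫`, so
`‖Pv‖ ≤ ‖P - Q‖ ‖v‖`; when `P` is bounded below on `V` by more than `‖P - Q‖` this forces `Pv = 0`.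
Hence `W ⊓ Wₙᗮ = Wₙ ⊓ Wᗮ = ⊥`, which says exactly that the orthogonal projections `Wᗮ → Wₙᗮ`
and `Wₙᗮ → Wᗮ` are injective. Hilbert dimension does not increase along injective bounded
operators: by Bessel's inequality applied to the adjoint, each vector of a Hilbert basis of the
target pairs nontrivially with only countably many images of an orthonormal family, and every
such image is nonzero.
-/

/-- The Hilbert dimension of an inner product space: the supremum of cardinalities of
orthonormal subsets. -/
noncomputable def hdim (𝕜 E : Type*) [RCLike 𝕜] [NormedAddCommGroup E]
    [InnerProductSpace 𝕜 E] : Cardinal :=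
  ⨆ s : {s : Set E // Orthonormal 𝕜 (fun x : s => (x : E))}, Cardinal.mk s.1

open scoped InnerProductSpace

universe u

section InnerProductSpace

variable {𝕜 E F : Type*} [RCLike 𝕜] [NormedAddCommGroup E] [InnerProductSpace 𝕜 E]
  [NormedAddCommGroup F] [InnerProductSpace 𝕜 F]

theorem Orthonormal.countable_inner_ne_zero {ι : Type*} {v : ι → E} (hv : Orthonormal 𝕜 v)
    (x : E) : {i | ⟪v i, x⟫_𝕜 ≠ 0}.Countable :=
  (hv.inner_products_summable (x := x)).countable_support.mono fun i hi => by
    simpa [Function.mem_support] using hi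

theorem HilbertBasis.exists_inner_ne_zero {ι : Type*} [CompleteSpace F] (b : HilbertBasis ι 𝕜 F)
    {x : F} (hx : x ≠ 0) : ∃ i, ⟪b i, x⟫_𝕜 ≠ 0 := by
  by_contra! h
  exact hx (b.repr.injective (by ext i; simp [b.repr_apply_apply, h]))

theorem Orthonormal.mk_le_of_hilbertBasis_of_infinite {ι κ : Type u} [Infinite κ]
    [CompleteSpace E] [CompleteSpace F] {v : ι → E} (hv : Orthonormal 𝕜 v)
    (b : HilbertBasis κ 𝕜 F) (T : E →L[𝕜] F) (hT : Function.Injective T) :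
    Cardinal.mk ι ≤ Cardinal.mk κ := by
  have hcover : ∀ j, ∃ i, ⟪b i, T (v j)⟫_𝕜 ≠ 0 := fun j =>
    b.exists_inner_ne_zero ((map_ne_zero_iff T hT).mpr (hv.ne_zero j))
  choose f hf using hcover
  refine (Cardinal.mk_le_mk_mul_of_mk_preimage_le f fun i => ?_).trans
    (Cardinal.mul_aleph0_eq (Cardinal.aleph0_le_mk κ)).le
  refine Cardinal.mk_le_aleph0_iff.mpr
    ((hv.countable_inner_ne_zero (T.adjoint (b i))).mono ?_).to_subtype
  rintro j (rfl : f j = i)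
  rw [Set.mem_ofPred_eq, T.adjoint_inner_right, Ne, inner_eq_zero_symm]
  exact hf j

theorem Orthonormal.mk_le_of_hilbertBasis_of_finite {ι κ : Type u} [Finite κ]
    [CompleteSpace F] {v : ι → E} (hv : Orthonormal 𝕜 v)
    (b : HilbertBasis κ 𝕜 F) (T : E →L[𝕜] F) (hT : Function.Injective T) :
    Cardinal.mk ι ≤ Cardinal.mk κ :=
  have := Fintype.ofFinite κ
  linearIndependent_le_basis b.toOrthonormalBasis.toBasis (T ∘ v)
    (hv.linearIndependent.map' T.toLinearMap (LinearMap.ker_eq_bot.mpr hT))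

theorem Orthonormal.mk_le_of_hilbertBasis {ι κ : Type u} [CompleteSpace E] [CompleteSpace F]
    {v : ι → E} (hv : Orthonormal 𝕜 v) (b : HilbertBasis κ 𝕜 F) (T : E →L[𝕜] F)
    (hT : Function.Injective T) : Cardinal.mk ι ≤ Cardinal.mk κ := by
  cases finite_or_infinite κ
  · exact hv.mk_le_of_hilbertBasis_of_finite b T hT
  · exact hv.mk_le_of_hilbertBasis_of_infinite b T hT

theorem Submodule.map_inf_orthogonal_map_eq_bot {V : Submodule 𝕜 E} {P Q : E →L[𝕜] F} {c : ℝ}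
    (hP : ∀ x ∈ V, c * ‖x‖ ≤ ‖P x‖) (hPQ : ‖P - Q‖ < c) :
    V.map P.toLinearMap ⊓ (V.map Q.toLinearMap)ᗮ = ⊥ := by
  refine (Submodule.eq_bot_iff _).mpr ?_
  rintro _ ⟨⟨x, hx, rfl⟩, hQ⟩
  have horth : ⟪Q x, P x⟫_𝕜 = 0 := (Submodule.mem_orthogonal _ _).mp hQ (Q x) ⟨x, hx, rfl⟩
  have hsq : ‖P x‖ * ‖P x‖ ≤ ‖P - Q‖ * ‖x‖ * ‖P x‖ :=
    calc ‖P x‖ * ‖P x‖ = RCLike.re ⟪(P - Q) x, P x⟫_𝕜 := by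
          rw [sub_apply, inner_sub_left, horth, sub_zero, inner_self_eq_norm_mul_norm]
      _ ≤ ‖(P - Q) x‖ * ‖P x‖ := re_inner_le_norm _ _
      _ ≤ ‖P - Q‖ * ‖x‖ * ‖P x‖ := by gcongr; exact (P - Q).le_opNorm x
  have hle : ‖P x‖ ≤ ‖P - Q‖ * ‖x‖ := by
    rcases (norm_nonneg (P x)).eq_or_lt with h | h
    · rw [← h]; positivity
    · exact le_of_mul_le_mul_right hsq h
  have hx0 : ‖x‖ = 0 := by nlinarith [hP x hx, norm_nonneg x]
  simpa [hx0] using hle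

end InnerProductSpace

section HilbertDimension

variable {𝕜 : Type*} [RCLike 𝕜]

theorem Orthonormal.mk_le_hdim {ι E : Type u} [NormedAddCommGroup E] [InnerProductSpace 𝕜 E]
    {v : ι → E} (hv : Orthonormal 𝕜 v) : Cardinal.mk ι ≤ hdim 𝕜 E := by
  rw [← Cardinal.mk_range_eq v hv.linearIndependent.injective]
  exact le_ciSup (f := fun s : {s : Set E // Orthonormal 𝕜 (fun x : s => (x : E))} =>
      Cardinal.mk s.1)
    Cardinal.bddAbove_of_small ⟨Set.range v, hv.toSubtypeRange⟩

theorem hdim_le_of_injective {E F : Type u} [NormedAddCommGroup E] [InnerProductSpace 𝕜 E]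
    [NormedAddCommGroup F] [InnerProductSpace 𝕜 F] [CompleteSpace E] [CompleteSpace F]
    (T : E →L[𝕜] F) (hT : Function.Injective T) : hdim 𝕜 E ≤ hdim 𝕜 F := by
  obtain ⟨w, b, -⟩ := exists_hilbertBasis 𝕜 F
  exact ciSup_le' fun s => (s.2.mk_le_of_hilbertBasis b T hT).trans b.orthonormal.mk_le_hdim

theorem Submodule.hdim_orthogonal_le_of_inf_orthogonal_eq_bot {K : Type u} [NormedAddCommGroup K]
    [InnerProductSpace 𝕜 K] [CompleteSpace K] {U W : Submodule 𝕜 K} [W.HasOrthogonalProjection]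
    (h : W ⊓ Uᗮ = ⊥) : hdim 𝕜 Uᗮ ≤ hdim 𝕜 Wᗮ := by
  refine hdim_le_of_injective (Wᗮ.orthogonalProjectionOnto ∘L Uᗮ.subtypeL)
    ((injective_iff_map_eq_zero _).mpr fun x hx => ?_)
  have hW : (x : K) ∈ W := by
    rw [← W.orthogonal_orthogonal, ← orthogonalProjectionOnto_eq_zero_iff]
    exact hx
  simpa [h] using Submodule.mem_inf.mpr ⟨hW, x.2⟩

end HilbertDimension

section BoundedBelow

variable {𝕜 E F : Type*} [NontriviallyNormedField 𝕜] [NormedAddCommGroup E] [NormedSpace 𝕜 E]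
  [NormedAddCommGroup F] [NormedSpace 𝕜 F] {V : Submodule 𝕜 E} {c : ℝ}

theorem Submodule.isClosed_map_of_bounded_below [CompleteSpace V] {A : E →L[𝕜] F} (hc : 0 < c)
    (hA : ∀ x ∈ V, c * ‖x‖ ≤ ‖A x‖) : IsClosed (V.map A.toLinearMap : Set F) := by
  have hanti : AntilipschitzWith (Real.toNNReal c)⁻¹ (A.comp V.subtypeL) :=
    ContinuousLinearMap.antilipschitz_of_bound _ fun x => by
      rw [NNReal.coe_inv, Real.coe_toNNReal c hc.le, inv_mul_eq_div, le_div_iff₀ hc, mul_comm]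
      exact hA x x.2
  rw [Submodule.map_coe, ← Subtype.range_coe (s := (V : Set E)), ← Set.range_comp]
  exact hanti.isClosed_range (A.comp V.subtypeL).uniformContinuous

theorem ContinuousLinearMap.lower_bound_of_perturbation {A B : E →L[𝕜] F}
    (hA : ∀ x ∈ V, c * ‖x‖ ≤ ‖A x‖) : ∀ x ∈ V, (c - ‖B - A‖) * ‖x‖ ≤ ‖B x‖ := fun x hx =>
  calc (c - ‖B - A‖) * ‖x‖ ≤ ‖A x‖ - ‖(B - A) x‖ := by
        rw [sub_mul]; exact sub_le_sub (hA x hx) ((B - A).le_opNorm x)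
    _ ≤ ‖B x‖ := by
        rw [sub_apply]; linarith [norm_sub_norm_le (A x) (B x), norm_sub_rev (A x) (B x)]

end BoundedBelow

theorem eventually_hdim_orthogonal_image_eq
    {H K : Type u} [NormedAddCommGroup H] [InnerProductSpace ℂ H] [CompleteSpace H]
    [NormedAddCommGroup K] [InnerProductSpace ℂ K] [CompleteSpace K]
    (A : H →L[ℂ] K) (As : ℕ → (H →L[ℂ] K))
    (hconv : Filter.Tendsto As Filter.atTop (nhds A))
    (V : Submodule ℂ H) (hV : IsClosed (V : Set H))
    (c : ℝ) (hc : 0 < c) (hbb : ∀ x ∈ V, c * ‖x‖ ≤ ‖A x‖) :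
    ∃ N : ℕ, ∀ n ≥ N,
      hdim ℂ ↥(Submodule.map (As n).toLinearMap V)ᗮ
        = hdim ℂ ↥(Submodule.map A.toLinearMap V)ᗮ := by
  obtain ⟨N, hN⟩ := Filter.eventually_atTop.mp
    (hconv.eventually (Metric.ball_mem_nhds A (half_pos hc)))
  refine ⟨N, fun n hn => ?_⟩
  have hclose : ‖As n - A‖ < c / 2 := by simpa [dist_eq_norm] using hN n hn
  have hbbn : ∀ x ∈ V, c / 2 * ‖x‖ ≤ ‖As n x‖ := fun x hx =>
    (ContinuousLinearMap.lower_bound_of_perturbation hbb x hx).trans' (by gcongr; linarith)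
  have := hV.completeSpace_coe
  have := (V.isClosed_map_of_bounded_below hc hbb).completeSpace_coe
  have := (V.isClosed_map_of_bounded_below (half_pos hc) hbbn).completeSpace_coe
  refine le_antisymm (Submodule.hdim_orthogonal_le_of_inf_orthogonal_eq_bot ?_)
    (Submodule.hdim_orthogonal_le_of_inf_orthogonal_eq_bot ?_)
  · exact V.map_inf_orthogonal_map_eq_bot hbb (by rw [norm_sub_rev]; linarith)
  · exact V.map_inf_orthogonal_map_eq_bot hbbn (by linarith)
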